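/- Let n ≥ 1, 0 < σ < 1/2, Ω ⊂ ℝⁿ open of finite measure, and for δ > 0 let u_δ be a C¹ function with compact support in Ω satisfying u_δ(x) = 1 whenever dist(x, Ωᶜ) ≥ δ, 0 ≤ u_δ ≤ 1, and |∇u_δ| ≤ C/δ. Then there is a constant C' (depending only on n, σ, C) such that I_Ω[u_δ] ≤ C' δ^(−2σ) |{x ∈ Ω : dist(x, Ωᶜ) < δ}|. -/

import Mathlib

/-!
Split the inner integral `∫ (u x - u y)² / ‖x - y‖^(n+2σ) dy` at `‖x - y‖ = δ`. Near the
diagonal `|u x - u y| ≤ (C/δ) ‖x - y‖`, and since `2 - 2σ > 0` the kernel `‖z‖^(2-n-2σ)` is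
integrable on the unit ball; away from it `|u x - u y| ≤ 1` and `‖z‖^(-n-2σ)` is integrable
outside the unit ball. Scaling `z = δ w` turns both pieces into `O(δ^(-2σ))`, uniformly in `x`.
Finally the integrand vanishes when both points lie in `Ω` off the boundary layer
`A = {x ∈ Ω | dist(x, Ωᶜ) < δ}`, so by symmetry the double integral is at most twice the
integral over `x ∈ A`.
-/

open MeasureTheory Set Metric Module
open scoped ENNReal

lemma preimage_add_smul_ball {E : Type*} [NormedAddCommGroup E] [NormedSpace ℝ E] (x : E) {δ : ℝ}
    (hδ : 0 < δ) :
    (fun w ↦ x + δ • w) ⁻¹' ball x δ = ball 0 1 := by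
  ext w
  simp [dist_eq_norm, norm_smul, abs_of_pos hδ, hδ]

lemma setLIntegral_setLIntegral_le_of_eq_zero_on_diff {α : Type*} [MeasurableSpace α]
    {ν : Measure α} [SFinite ν] {F : α → α → ℝ≥0∞} (hF : Measurable (Function.uncurry F))
    (hsymm : ∀ x y, F x y = F y x) {Ω A : Set α} (hΩ : MeasurableSet Ω) (hA : MeasurableSet A)
    (hAΩ : A ⊆ Ω) (hzero : ∀ x ∈ Ω \ A, ∀ y ∈ Ω \ A, F x y = 0) {M : ℝ≥0∞}
    (hM : ∀ x, ∫⁻ y in Ω, F x y ∂ν ≤ M) :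
    ∫⁻ x in Ω, ∫⁻ y in Ω, F x y ∂ν ∂ν ≤ 2 * M * ν A := by
  have hB : MeasurableSet (Ω \ A) := hΩ.diff hA
  have hA_part : ∫⁻ x in A, ∫⁻ y in Ω, F x y ∂ν ∂ν ≤ M * ν A :=
    (lintegral_mono hM).trans_eq (setLIntegral_const A M)
  have hB_inner : ∀ x ∈ Ω \ A, ∫⁻ y in Ω, F x y ∂ν ≤ ∫⁻ y in A, F x y ∂ν := fun x hx ↦ by
    calc ∫⁻ y in Ω, F x y ∂ν = ∫⁻ y in A ∪ Ω \ A, F x y ∂ν := by rw [union_sdiff_cancel hAΩ]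
      _ ≤ (∫⁻ y in A, F x y ∂ν) + ∫⁻ y in Ω \ A, F x y ∂ν := lintegral_union_le _ _ _
      _ = ∫⁻ y in A, F x y ∂ν := by
        rw [setLIntegral_congr_fun hB (g := fun _ ↦ 0) (hzero x hx), lintegral_zero, add_zero]
  have hB_part : ∫⁻ x in Ω \ A, ∫⁻ y in Ω, F x y ∂ν ∂ν ≤ M * ν A :=
    calc ∫⁻ x in Ω \ A, ∫⁻ y in Ω, F x y ∂ν ∂ν ≤ ∫⁻ x in Ω \ A, ∫⁻ y in A, F x y ∂ν ∂ν :=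
          setLIntegral_mono' hB hB_inner
      _ = ∫⁻ y in A, ∫⁻ x in Ω \ A, F x y ∂ν ∂ν := lintegral_lintegral_swap hF.aemeasurable
      _ ≤ ∫⁻ y in A, ∫⁻ x in Ω, F y x ∂ν ∂ν := lintegral_mono fun y ↦ by
          simp_rw [hsymm _ y]
          exact lintegral_mono_set sdiff_subset
      _ ≤ M * ν A := hA_part
  calc ∫⁻ x in Ω, ∫⁻ y in Ω, F x y ∂ν ∂ν = ∫⁻ x in A ∪ Ω \ A, ∫⁻ y in Ω, F x y ∂ν ∂ν := by
        rw [union_sdiff_cancel hAΩ]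
    _ ≤ (∫⁻ x in A, ∫⁻ y in Ω, F x y ∂ν ∂ν) + ∫⁻ x in Ω \ A, ∫⁻ y in Ω, F x y ∂ν ∂ν :=
        lintegral_union_le _ _ _
    _ ≤ M * ν A + M * ν A := add_le_add hA_part hB_part
    _ = 2 * M * ν A := by ring

variable {E : Type*} [NormedAddCommGroup E] [NormedSpace ℝ E] [FiniteDimensional ℝ E]
  [MeasurableSpace E] [BorelSpace E] (μ : Measure E) [μ.IsAddHaarMeasure]

lemma setLIntegral_norm_sub_rpow_eq (a : ℝ) (x : E) {δ : ℝ} (hδ : 0 < δ) {s : Set E}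
    (hs : MeasurableSet s) :
    ∫⁻ y in s, ENNReal.ofReal (‖x - y‖ ^ a) ∂μ =
      ENNReal.ofReal (δ ^ (a + finrank ℝ E)) *
        ∫⁻ w in (fun w ↦ x + δ • w) ⁻¹' s, ENNReal.ofReal (‖w‖ ^ a) ∂μ := by
  have hmap : μ.map (fun w ↦ x + δ • w) = ENNReal.ofReal ((δ ^ finrank ℝ E)⁻¹) • μ := by
    change μ.map ((x + ·) ∘ (δ • ·)) = _
    rw [← Measure.map_map (measurable_const_add x) (measurable_const_smul δ),
      Measure.map_addHaar_smul μ hδ.ne', Measure.map_smul, map_add_left_eq_self,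
      abs_of_pos (by positivity)]
  have key := setLIntegral_map (μ := μ) hs (f := fun y ↦ ENNReal.ofReal (‖x - y‖ ^ a))
    (by fun_prop) (by fun_prop : Measurable fun w : E ↦ x + δ • w)
  have hscale : ∀ w : E, ‖x - (x + δ • w)‖ ^ a = δ ^ a * ‖w‖ ^ a := fun w ↦ by
    rw [sub_add_cancel_left, norm_neg, norm_smul, Real.norm_of_nonneg hδ.le,
      Real.mul_rpow hδ.le (norm_nonneg w)]
  simp_rw [hmap, Measure.restrict_smul, lintegral_smul_measure, hscale,
    ENNReal.ofReal_mul (Real.rpow_nonneg hδ.le a)] at key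
  rw [lintegral_const_mul' _ _ ENNReal.ofReal_ne_top] at key
  rw [smul_eq_mul] at key
  have hd : 0 < δ ^ finrank ℝ E := by positivity
  rw [Real.rpow_add hδ, Real.rpow_natCast, mul_comm (δ ^ a), ENNReal.ofReal_mul hd.le, mul_assoc,
    ← key, ← mul_assoc, ← ENNReal.ofReal_mul hd.le, mul_inv_cancel₀ hd.ne', ENNReal.ofReal_one,
    one_mul]

lemma setLIntegral_unitBall_norm_rpow_lt_top {a : ℝ} (ha : -(finrank ℝ E : ℝ) < a) :
    ∫⁻ z in ball (0 : E) 1, ENNReal.ofReal (‖z‖ ^ a) ∂μ < ∞ := by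
  refine IntegrableOn.setLIntegral_lt_top ?_
  rcases le_or_gt 0 a with ha0 | ha0
  · exact ((continuous_norm.rpow_const fun _ ↦ Or.inr ha0).continuousOn.integrableOn_compact
      (isCompact_closedBall 0 1)).mono_set ball_subset_closedBall
  · have hd : 1 ≤ finrank ℝ E := by
      by_contra! h
      rw [Nat.lt_one_iff.1 h, Nat.cast_zero, neg_zero] at ha
      linarith
    refine integrableOn_ball_of_norm_le_rpow (C := 1) hd (α := -a) (by linarith) ?_
      (by fun_prop : Measurable fun z : E ↦ ‖z‖ ^ a).aestronglyMeasurable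
    refine Filter.Eventually.of_forall fun z ↦ ?_
    rw [neg_neg, one_mul, Real.norm_of_nonneg (by positivity)]

lemma setLIntegral_compl_unitBall_norm_rpow_lt_top {b : ℝ} (hb : b < -(finrank ℝ E : ℝ)) :
    ∫⁻ z in (ball (0 : E) 1)ᶜ, ENNReal.ofReal (‖z‖ ^ b) ∂μ < ∞ := by
  have hb0 : b < 0 := hb.trans_le (by simp)
  have hpt : ∀ z ∈ (ball (0 : E) 1)ᶜ, ENNReal.ofReal (‖z‖ ^ b) ≤
      ENNReal.ofReal (2 ^ (-b)) * ENNReal.ofReal ((1 + ‖z‖) ^ (-(-b))) := by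
    intro z hz
    have hz1 : 1 ≤ ‖z‖ := by simpa using hz
    rw [← ENNReal.ofReal_mul (by positivity), neg_neg]
    refine ENNReal.ofReal_le_ofReal ?_
    calc ‖z‖ ^ b = 2 ^ (-b) * (2 * ‖z‖) ^ b := by
          rw [Real.mul_rpow zero_le_two (norm_nonneg z), ← mul_assoc, ← Real.rpow_add two_pos,
            neg_add_cancel, Real.rpow_zero, one_mul]
      _ ≤ 2 ^ (-b) * (1 + ‖z‖) ^ b := by
          have h := Real.rpow_le_rpow_of_nonpos (by positivity : (0 : ℝ) < 1 + ‖z‖)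
            (by linarith : 1 + ‖z‖ ≤ 2 * ‖z‖) hb0.le
          exact mul_le_mul_of_nonneg_left h (by positivity)
  calc ∫⁻ z in (ball (0 : E) 1)ᶜ, ENNReal.ofReal (‖z‖ ^ b) ∂μ
      ≤ ∫⁻ z in (ball (0 : E) 1)ᶜ,
          ENNReal.ofReal (2 ^ (-b)) * ENNReal.ofReal ((1 + ‖z‖) ^ (-(-b))) ∂μ :=
        setLIntegral_mono' measurableSet_ball.compl hpt
    _ ≤ ∫⁻ z, ENNReal.ofReal (2 ^ (-b)) * ENNReal.ofReal ((1 + ‖z‖) ^ (-(-b))) ∂μ :=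
        setLIntegral_le_lintegral _ _
    _ = ENNReal.ofReal (2 ^ (-b)) * ∫⁻ z, ENNReal.ofReal ((1 + ‖z‖) ^ (-(-b))) ∂μ :=
        lintegral_const_mul' _ _ ENNReal.ofReal_ne_top
    _ < ∞ := ENNReal.mul_lt_top ENNReal.ofReal_lt_top
        (finite_integral_one_add_norm (by linarith))

/-- Half the constant `C'`: the near- and far-diagonal contributions rescaled to radius `1`. -/
noncomputable def gagliardoCutoffConst (μ : Measure E) (C σ : ℝ) : ℝ≥0∞ :=
  ENNReal.ofReal (C ^ 2) *
      ∫⁻ z in ball (0 : E) 1, ENNReal.ofReal (‖z‖ ^ (2 - (finrank ℝ E + 2 * σ))) ∂μ +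
    ∫⁻ z in (ball (0 : E) 1)ᶜ, ENNReal.ofReal (‖z‖ ^ (-(finrank ℝ E + 2 * σ))) ∂μ

lemma gagliardoCutoffConst_ne_top (C : ℝ) {σ : ℝ} (hσ0 : 0 < σ) (hσ1 : σ < 1) :
    gagliardoCutoffConst μ C σ ≠ ∞ := by
  refine ENNReal.add_ne_top.2 ⟨ENNReal.mul_ne_top ENNReal.ofReal_ne_top ?_, ?_⟩
  · exact (setLIntegral_unitBall_norm_rpow_lt_top μ (by linarith)).ne
  · exact (setLIntegral_compl_unitBall_norm_rpow_lt_top μ (by linarith)).ne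

lemma lintegral_sq_sub_div_norm_rpow_le {σ C δ : ℝ} (hδ : 0 < δ) {u : E → ℝ}
    (hlip : ∀ x y, |u x - u y| ≤ C / δ * ‖x - y‖) (hosc : ∀ x y, |u x - u y| ≤ 1) (x : E) :
    ∫⁻ y, ENNReal.ofReal ((u x - u y) ^ 2 / ‖x - y‖ ^ (finrank ℝ E + 2 * σ)) ∂μ ≤
      gagliardoCutoffConst μ C σ * ENNReal.ofReal (δ ^ (-(2 * σ))) := by
  set p : ℝ := finrank ℝ E + 2 * σ
  have hnear : ∀ y, ENNReal.ofReal ((u x - u y) ^ 2 / ‖x - y‖ ^ p) ≤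
      ENNReal.ofReal ((C / δ) ^ 2) * ENNReal.ofReal (‖x - y‖ ^ (2 - p)) := by
    intro y
    rw [← ENNReal.ofReal_mul (by positivity)]
    refine ENNReal.ofReal_le_ofReal ?_
    rcases eq_or_ne x y with rfl | hxy
    · simp only [sub_self, ne_eq, OfNat.ofNat_ne_zero, not_false_eq_true, zero_pow, zero_div]
      positivity
    have hpos : 0 < ‖x - y‖ := norm_pos_iff.2 (sub_ne_zero.2 hxy)
    rw [Real.rpow_sub hpos, Real.rpow_two, ← mul_div_assoc, ← mul_pow, ← sq_abs]
    gcongr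
    exact hlip x y
  have hfar : ∀ y, ENNReal.ofReal ((u x - u y) ^ 2 / ‖x - y‖ ^ p) ≤
      ENNReal.ofReal (‖x - y‖ ^ (-p)) := by
    intro y
    refine ENNReal.ofReal_le_ofReal ?_
    rw [Real.rpow_neg (norm_nonneg _), inv_eq_one_div, ← sq_abs]
    gcongr
    exact pow_le_one₀ (abs_nonneg _) (hosc x y)
  have hfar_exp : -p + finrank ℝ E = -(2 * σ) := by ring
  have hnear_const : ENNReal.ofReal ((C / δ) ^ 2) * ENNReal.ofReal (δ ^ (2 - p + finrank ℝ E)) =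
      ENNReal.ofReal (C ^ 2) * ENNReal.ofReal (δ ^ (-(2 * σ))) := by
    rw [← ENNReal.ofReal_mul (by positivity), ← ENNReal.ofReal_mul (by positivity),
      show 2 - p + finrank ℝ E = 2 + -(2 * σ) by ring, Real.rpow_add hδ, Real.rpow_two]
    congr 1
    field_simp
  calc ∫⁻ y, ENNReal.ofReal ((u x - u y) ^ 2 / ‖x - y‖ ^ p) ∂μ
      = (∫⁻ y in ball x δ, ENNReal.ofReal ((u x - u y) ^ 2 / ‖x - y‖ ^ p) ∂μ) +
          ∫⁻ y in (ball x δ)ᶜ, ENNReal.ofReal ((u x - u y) ^ 2 / ‖x - y‖ ^ p) ∂μ :=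
        (lintegral_add_compl _ measurableSet_ball).symm
    _ ≤ ENNReal.ofReal ((C / δ) ^ 2) * ∫⁻ y in ball x δ, ENNReal.ofReal (‖x - y‖ ^ (2 - p)) ∂μ +
          ∫⁻ y in (ball x δ)ᶜ, ENNReal.ofReal (‖x - y‖ ^ (-p)) ∂μ := by
        rw [← lintegral_const_mul' _ _ ENNReal.ofReal_ne_top]
        exact add_le_add (lintegral_mono hnear) (lintegral_mono hfar)
    _ = gagliardoCutoffConst μ C σ * ENNReal.ofReal (δ ^ (-(2 * σ))) := by
        rw [setLIntegral_norm_sub_rpow_eq μ _ x hδ measurableSet_ball,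
          setLIntegral_norm_sub_rpow_eq μ _ x hδ measurableSet_ball.compl, preimage_compl,
          preimage_add_smul_ball x hδ, gagliardoCutoffConst, hfar_exp, ← mul_assoc,
          hnear_const]
        ring

theorem lintegral_gagliardo_le_of_eq_one_on_diff {σ C δ : ℝ} (hδ : 0 < δ) {u : E → ℝ}
    (hu : Continuous u) (hlip : ∀ x y, |u x - u y| ≤ C / δ * ‖x - y‖)
    (hosc : ∀ x y, |u x - u y| ≤ 1) {Ω A : Set E} (hΩ : MeasurableSet Ω) (hA : MeasurableSet A)
    (hAΩ : A ⊆ Ω) (hone : ∀ x ∈ Ω \ A, u x = 1) :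
    ∫⁻ x in Ω, ∫⁻ y in Ω, ENNReal.ofReal ((u x - u y) ^ 2 / ‖x - y‖ ^ (finrank ℝ E + 2 * σ)) ∂μ ∂μ
      ≤ 2 * (gagliardoCutoffConst μ C σ * ENNReal.ofReal (δ ^ (-(2 * σ)))) * μ A := by
  refine setLIntegral_setLIntegral_le_of_eq_zero_on_diff (by fun_prop) (fun x y ↦ ?_) hΩ hA hAΩ
    (fun x hx y hy ↦ by simp [hone x hx, hone y hy])
    (fun x ↦ (setLIntegral_le_lintegral _ _).trans
      (lintegral_sq_sub_div_norm_rpow_le μ hδ hlip hosc x))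
  rw [norm_sub_rev, ← neg_sub, neg_sq]

theorem stmt6_general (n : ℕ) (σ C : ℝ) (hσ0 : 0 < σ) (hσ1 : σ < 1 / 2) :
    ∃ C' : ℝ, 0 < C' ∧
      ∀ (Ω : Set (EuclideanSpace ℝ (Fin n))), IsOpen Ω → volume Ω ≠ ⊤ →
      ∀ δ : ℝ, 0 < δ →
      ∀ u : EuclideanSpace ℝ (Fin n) → ℝ, ContDiff ℝ 1 u → HasCompactSupport u →
        tsupport u ⊆ Ω →
        (∀ x ∈ Ω, δ ≤ infDist x Ωᶜ → u x = 1) →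
        (∀ x, 0 ≤ u x ∧ u x ≤ 1) →
        (∀ x, ‖fderiv ℝ u x‖ ≤ C / δ) →
        (∫⁻ x in Ω, ∫⁻ y in Ω,
            ENNReal.ofReal ((u x - u y) ^ 2 / ‖x - y‖ ^ ((n : ℝ) + 2 * σ)))
          ≤ ENNReal.ofReal (C' * δ ^ (-(2 * σ))) * volume {x ∈ Ω | infDist x Ωᶜ < δ} := by
  set K := gagliardoCutoffConst (volume : Measure (EuclideanSpace ℝ (Fin n))) C σ
  have hK : K ≠ ∞ := gagliardoCutoffConst_ne_top _ C hσ0 (by linarith)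
  refine ⟨2 * K.toReal + 1, by positivity, ?_⟩
  intro Ω hΩ _ δ hδ u hu _ _ hone h01 hderiv
  have hlip : ∀ x y, |u x - u y| ≤ C / δ * ‖x - y‖ := fun x y ↦ by
    simpa [Real.norm_eq_abs] using convex_univ.norm_image_sub_le_of_norm_fderiv_le
      (fun z _ ↦ (hu.differentiable one_ne_zero).differentiableAt) (fun z _ ↦ hderiv z)
      (mem_univ y) (mem_univ x)
  have hosc : ∀ x y, |u x - u y| ≤ 1 := fun x y ↦ by
    rw [abs_sub_le_iff]; constructor <;> linarith [h01 x, h01 y]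
  have hA : MeasurableSet {x ∈ Ω | infDist x Ωᶜ < δ} :=
    hΩ.measurableSet.inter (measurableSet_lt (continuous_infDist_pt _).measurable measurable_const)
  have hbound := lintegral_gagliardo_le_of_eq_one_on_diff volume (σ := σ) hδ hu.continuous hlip
    hosc hΩ.measurableSet hA (sep_subset _ _)
    (fun x hx ↦ hone x hx.1 (not_lt.1 fun h ↦ hx.2 ⟨hx.1, h⟩))
  rw [finrank_euclideanSpace_fin] at hbound
  refine hbound.trans (mul_le_mul_left ?_ _)
  rw [← mul_assoc, ENNReal.ofReal_mul (by positivity)]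
  refine mul_le_mul_left ?_ _
  calc 2 * K = ENNReal.ofReal (2 * K.toReal) := by
        rw [ENNReal.ofReal_mul zero_le_two, ENNReal.ofReal_toReal hK, ENNReal.ofReal_ofNat]
    _ ≤ ENNReal.ofReal (2 * K.toReal + 1) := ENNReal.ofReal_le_ofReal (by linarith)

/-- Estimate for the Gagliardo energy of a cutoff function: if `u_δ ∈ C¹_c(Ω)` satisfies
`u_δ = 1` at distance `≥ δ` from `Ωᶜ`, `0 ≤ u_δ ≤ 1` and `|∇u_δ| ≤ C/δ`, then
`I_Ω[u_δ] ≤ C' δ^{-2σ} |{x ∈ Ω : dist(x,Ωᶜ) < δ}|` with `C' = C'(n,σ,C)`. -/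
theorem stmt6 (n : ℕ) (hn : 1 ≤ n) (σ C : ℝ) (hσ0 : 0 < σ) (hσ1 : σ < 1 / 2) (hC : 0 < C) :
    ∃ C' : ℝ, 0 < C' ∧
      ∀ (Ω : Set (EuclideanSpace ℝ (Fin n))), IsOpen Ω → volume Ω ≠ ⊤ →
      ∀ δ : ℝ, 0 < δ →
      ∀ u : EuclideanSpace ℝ (Fin n) → ℝ, ContDiff ℝ 1 u → HasCompactSupport u →
        tsupport u ⊆ Ω →
        (∀ x ∈ Ω, δ ≤ infDist x Ωᶜ → u x = 1) →
        (∀ x, 0 ≤ u x ∧ u x ≤ 1) →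
        (∀ x, ‖fderiv ℝ u x‖ ≤ C / δ) →
        (∫⁻ x in Ω, ∫⁻ y in Ω,
            ENNReal.ofReal ((u x - u y) ^ 2 / ‖x - y‖ ^ ((n : ℝ) + 2 * σ)))
          ≤ ENNReal.ofReal (C' * δ ^ (-(2 * σ))) * volume {x ∈ Ω | infDist x Ωᶜ < δ} :=
  stmt6_general n σ C hσ0 hσ1
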